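/- arXiv:1404.5996 — 9 statements merged into one kernel-verified Lean document; each statement's English description precedes it below -/
import Mathlib

section
/- Let G = (V, E) be a finite simple graph and let σ = v_1, …, v_n be an ordering of V. For each i with 1 ≤ i ≤ n and each vertex x, let label_i(x) denote the strictly decreasing list of all indices j < i such that v_j x ∈ E. Then σ is a LexDFS ordering of G — that is, for every i with 1 ≤ i ≤ n and every k with i < k ≤ n, label_i(v_k) is less than or equal to label_i(v_i) in the lexicographic order on lists of natural numbers (entries compared by the usual order on ℕ, a proper prefix being smaller than any list extending it) — if and only if σ satisfies the LexDFS 4-point condition. -/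
/-- The LexDFS 4-point condition for the ordering `σ` of `G`. -/
def FourPointLexDFS {V : Type*} {n : ℕ} (G : SimpleGraph V) (σ : Fin n ≃ V) : Prop :=
  ∀ i j k : Fin n, i < j → j < k → G.Adj (σ i) (σ k) → ¬ G.Adj (σ i) (σ j) →
    ∃ d : Fin n, i < d ∧ d < j ∧ G.Adj (σ d) (σ j) ∧ ¬ G.Adj (σ d) (σ k)

/-- `lexLabel G σ i x` is the LexDFS label of the vertex `x` just before step `i` of the
search along `σ`: the strictly decreasing list of all indices `j < i` such that
`v_j x ∈ E` (indices of already-visited neighbours of `x`, largest first). -/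
def lexLabel {V : Type*} {n : ℕ} (G : SimpleGraph V) [DecidableRel G.Adj]
    (σ : Fin n ≃ V) (i : Fin n) (x : V) : List ℕ :=
  (((List.finRange n).filter (fun j => decide (j < i ∧ G.Adj (σ j) x))).map Fin.val).reverse

/-!
Labels are strictly decreasing lists of indices, so `label_i(x) ≤ label_i(y)` in the
lexicographic order is decided at the largest index in which the two labels differ: it holds
iff every index in `label_i(x) \ label_i(y)` is exceeded by an index in
`label_i(y) \ label_i(x)`. For `x = v_k` and `y = v_i` this is the 4-point condition for the
triple `(v_a, v_i, v_k)`, with the larger index `d` as the required witness.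
-/

namespace List

variable {α : Type*} [LinearOrder α]

theorem lt_cons_of_forall_mem_lt {l : List α} {b : α} (h : ∀ a ∈ l, a < b) (l' : List α) :
    l < b :: l' := by
  cases l with
  | nil => exact Lex.nil
  | cons a l => exact Lex.rel (h a mem_cons_self)

theorem cons_le_cons_self_iff {b : α} {l₁ l₂ : List α} : b :: l₁ ≤ b :: l₂ ↔ l₁ ≤ l₂ := by
  simp only [le_iff_eq_or_lt, cons.injEq, true_and]
  exact or_congr Iff.rfl lex_cons_iff

theorem strictMono_map {β : Type*} [LinearOrder β] {f : α → β} (hf : StrictMono f) :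
    StrictMono (map f) := fun _ _ h => List.map_lt (fun _ _ => @hf _ _) h

def DominatedOn (l : List α) (p q : α → Bool) : Prop :=
  ∀ a ∈ l, p a → ¬ q a → ∃ d ∈ l, a < d ∧ q d ∧ ¬ p d

variable {p q : α → Bool} {b : α} {l : List α}

theorem dominatedOn_cons_iff (hb : ∀ a ∈ l, a < b) :
    DominatedOn (b :: l) p q ↔ (p b → q b) ∧ (q b ∧ ¬ p b ∨ DominatedOn l p q) := by
  have no_above : ∀ d ∈ b :: l, ¬ b < d := by
    rintro d (_ | ⟨_, hd⟩)
    exacts [lt_irrefl b, (hb d hd).not_gt]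
  simp only [DominatedOn, forall_mem_cons]
  grind

theorem filter_cons_le_filter_cons_iff (hb : ∀ a ∈ l, a < b) :
    (b :: l).filter p ≤ (b :: l).filter q ↔
      (p b → q b) ∧ (q b ∧ ¬ p b ∨ l.filter p ≤ l.filter q) := by
  have hlt : ∀ r : α → Bool, ∀ l', l.filter r < b :: l' := fun r =>
    lt_cons_of_forall_mem_lt fun a ha => hb a (mem_filter.1 ha).1
  cases hp : p b <;> cases hq : q b <;>
    simp [hp, hq, cons_le_cons_self_iff, (hlt _ _).le, (hlt _ _).not_ge]

theorem filter_le_filter_iff_dominatedOn (hl : l.Pairwise (· > ·)) :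
    l.filter p ≤ l.filter q ↔ DominatedOn l p q := by
  induction l with
  | nil => simp [DominatedOn]
  | cons b l ih =>
    obtain ⟨hb, hl⟩ := pairwise_cons.1 hl
    rw [filter_cons_le_filter_cons_iff hb, dominatedOn_cons_iff hb, ih hl]

end List

section LexLabel

variable {V : Type*} {n : ℕ}

def visitedBefore (i : Fin n) : List (Fin n) :=
  ((List.finRange n).filter (· < i)).reverse

@[simp]
theorem mem_visitedBefore {i j : Fin n} : j ∈ visitedBefore i ↔ j < i := by
  simp [visitedBefore]

theorem pairwise_gt_visitedBefore (i : Fin n) : (visitedBefore i).Pairwise (· > ·) :=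
  List.pairwise_reverse.2 ((List.pairwise_lt_finRange n).filter _)

variable (G : SimpleGraph V) [DecidableRel G.Adj] (σ : Fin n ≃ V)

theorem lexLabel_eq_map_filter (i : Fin n) (x : V) :
    lexLabel G σ i x = ((visitedBefore i).filter fun j => G.Adj (σ j) x).map Fin.val := by
  simp [lexLabel, visitedBefore, List.filter_reverse, List.filter_filter, List.map_reverse,
    Bool.and_comm]

theorem lexLabel_le_lexLabel_iff (i : Fin n) (x y : V) :
    lexLabel G σ i x ≤ lexLabel G σ i y ↔
      ∀ a < i, G.Adj (σ a) x → ¬ G.Adj (σ a) y →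
        ∃ d, a < d ∧ d < i ∧ G.Adj (σ d) y ∧ ¬ G.Adj (σ d) x := by
  rw [lexLabel_eq_map_filter, lexLabel_eq_map_filter,
    (List.strictMono_map Fin.val_strictMono).le_iff_le,
    List.filter_le_filter_iff_dominatedOn (pairwise_gt_visitedBefore i)]
  simp [List.DominatedOn, and_left_comm]

end LexLabel

theorem lexdfs_label_iff_four_point_general {V : Type*} (G : SimpleGraph V)
    [DecidableRel G.Adj] {n : ℕ} (σ : Fin n ≃ V) :
    (∀ i k : Fin n, i < k →
        lexLabel G σ i (σ k) = lexLabel G σ i (σ i) ∨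
          List.Lex (· < ·) (lexLabel G σ i (σ k)) (lexLabel G σ i (σ i))) ↔
      FourPointLexDFS G σ := by
  -- Mathlib's order on `List ℕ` is by definition `l = l' ∨ List.Lex (· < ·) l l'`.
  change (∀ i k : Fin n, i < k → lexLabel G σ i (σ k) ≤ lexLabel G σ i (σ i)) ↔ _
  simp only [lexLabel_le_lexLabel_iff]
  exact ⟨fun h a i k hai hik => h i k hik a hai, fun h i k hik a hai => h a i k hai hik⟩

/-- An ordering `σ` of a finite graph `G` is a LexDFS ordering (at each step `i` the
vertex `v_i` has lexicographically maximal label among the unvisited vertices, where a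
proper prefix is smaller than any of its extensions) if and only if `σ` satisfies the
LexDFS 4-point condition. -/
theorem lexdfs_label_iff_four_point {V : Type*} [Fintype V] (G : SimpleGraph V)
    [DecidableRel G.Adj] {n : ℕ} (σ : Fin n ≃ V) :
    (∀ i k : Fin n, i < k →
        lexLabel G σ i (σ k) = lexLabel G σ i (σ i) ∨
          List.Lex (· < ·) (lexLabel G σ i (σ k)) (lexLabel G σ i (σ i))) ↔
      FourPointLexDFS G σ :=
  lexdfs_label_iff_four_point_general G σ
end

section
/- Let σ be an umbrella-free ordering of a finite simple graph G = (V, E). For any two vertices u, v with u ≺_σ v and uv ∉ E, one has #*(u) > #*(v), where #*(x) = |{w ∈ V : xw ∉ E and x ≺_σ w}|. -/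
/-- `σ` is an umbrella-free (cocomparability) ordering of `G`. -/
def UmbrellaFree {V : Type*} {n : ℕ} (G : SimpleGraph V) (σ : Fin n ≃ V) : Prop :=
  ∀ i j k : Fin n, i < j → j < k → G.Adj (σ i) (σ k) →
    G.Adj (σ i) (σ j) ∨ G.Adj (σ j) (σ k)

/-- `#*(v)`: the number of non-neighbours of `v` occurring after `v` in `σ`. -/
def hashStar {V : Type*} [Fintype V] {n : ℕ} (G : SimpleGraph V) [DecidableRel G.Adj]
    (σ : Fin n ≃ V) (v : V) : ℕ :=
  (Finset.univ.filter (fun w => ¬ G.Adj v w ∧ σ.symm v < σ.symm w)).card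

/-- If `σ` is an umbrella-free ordering and `u ≺_σ v` with `uv ∉ E`, then
`#*(u) > #*(v)`. -/
theorem hashStar_gt_of_ltP {V : Type*} [Fintype V] (G : SimpleGraph V)
    [DecidableRel G.Adj] {n : ℕ} (σ : Fin n ≃ V) (hσ : UmbrellaFree G σ)
    (u v : V) (hlt : σ.symm u < σ.symm v) (hadj : ¬ G.Adj u v) :
    hashStar G σ v < hashStar G σ u := by
  apply Finset.card_lt_card
  constructor
  · intro w hw
    simp only [Finset.mem_filter, Finset.mem_univ, true_and] at hw ⊢
    obtain ⟨hnadj, hvw⟩ := hw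
    refine ⟨?_, lt_trans hlt hvw⟩
    intro huw
    have := hσ (σ.symm u) (σ.symm v) (σ.symm w) hlt hvw (by simpa using huw)
    simp only [Equiv.apply_symm_apply] at this
    tauto
  · intro hsub
    have hv := hsub (by simp [hadj, hlt] : v ∈ _)
    simp at hv
end

section
/- Let σ be an umbrella-free ordering of a finite simple graph G = (V, E), and let (P_1, …, P_p), (U_1, …, U_p) and the labels #_i be defined by the recursive partition-class construction. Then for every step i with 1 ≤ i ≤ p and every pair of vertices u, v ∈ U_i with u ≺_σ v and uv ∉ E, one has #_i(u) > #_i(v). -/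
/-- The label `#_i(v) = #*(v) + |{z ∈ V \ U_i : vz ∈ E}|`, where `U` is the set of
still-unvisited vertices at step `i`. -/
def hashAt {V : Type*} [Fintype V] [DecidableEq V] {n : ℕ} (G : SimpleGraph V)
    [DecidableRel G.Adj] (σ : Fin n ≃ V) (U : Finset V) (v : V) : ℕ :=
  hashStar G σ v + (Finset.univ.filter (fun z => z ∉ U ∧ G.Adj v z)).card

/-- The partition class extracted from the unvisited set `U`: the vertices of `U`
whose `#` label is minimum over `U`. -/
def Pclass {V : Type*} [Fintype V] [DecidableEq V] {n : ℕ} (G : SimpleGraph V)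
    [DecidableRel G.Adj] (σ : Fin n ≃ V) (U : Finset V) : Finset V :=
  U.filter (fun v => ∀ u ∈ U, hashAt G σ U v ≤ hashAt G σ U u)

/-- `Uset G σ i` is the set `U_{i+1}` of vertices still unvisited after the first
`i` partition classes have been removed (0-indexed, so `Uset G σ 0 = U_1 = V`,
and `P_{i+1} = Pclass G σ (Uset G σ i)`). -/
def Uset {V : Type*} [Fintype V] [DecidableEq V] {n : ℕ} (G : SimpleGraph V)
    [DecidableRel G.Adj] (σ : Fin n ≃ V) : ℕ → Finset V
  | 0 => Finset.univ
  | i + 1 => Uset G σ i \ Pclass G σ (Uset G σ i)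

/-- The strict order `<_P` on vertices: `x <_P y` iff `x` precedes `y` in `σ` and
`xy` is a non-edge of `G` (the corresponding poset of the complement). -/
def ltP {V : Type*} {n : ℕ} (G : SimpleGraph V) (σ : Fin n ≃ V) (x y : V) : Prop :=
  σ.symm x < σ.symm y ∧ ¬ G.Adj x y

/-- At every step of the partition-class construction, if `u ≺_σ v` are both still
unvisited and `uv ∉ E`, then `#_i(u) > #_i(v)`. (Step `i+1` in 1-indexed terms;
`Uset G σ i = U_{i+1}`.) -/
theorem hashAt_gt_of_ltP {V : Type*} [Fintype V] [DecidableEq V] (G : SimpleGraph V)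
    [DecidableRel G.Adj] {n : ℕ} (σ : Fin n ≃ V) (hσ : UmbrellaFree G σ)
    (i : ℕ) (u v : V) (hu : u ∈ Uset G σ i) (hv : v ∈ Uset G σ i)
    (hlt : σ.symm u < σ.symm v) (hadj : ¬ G.Adj u v) :
    hashAt G σ (Uset G σ i) v < hashAt G σ (Uset G σ i) u := by
  set U := Uset G σ i with hU
  have hcard : ∀ x : V, hashAt G σ U x =
      (Finset.univ.filter (fun w => (¬ G.Adj x w ∧ σ.symm x < σ.symm w) ∨
        (w ∉ U ∧ G.Adj x w))).card := by
    intro x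
    rw [Finset.filter_or, Finset.card_union_of_disjoint]
    · rfl
    · refine Finset.disjoint_left.mpr ?_
      intro a ha hb
      simp only [Finset.mem_filter] at ha hb
      exact ha.2.1 hb.2.2
  rw [hcard, hcard]
  apply Finset.card_lt_card
  constructor
  · intro w hw
    simp only [Finset.mem_filter, Finset.mem_univ, true_and] at hw ⊢
    rcases hw with ⟨hnw, hvw⟩ | ⟨hwU, hvw⟩
    · -- u ≺ v ≺ w, ¬v~w : then ¬u~w by umbrella-freeness
      left
      refine ⟨fun huw => ?_, hlt.trans hvw⟩
      rcases hσ (σ.symm u) (σ.symm v) (σ.symm w) hlt hvw (by simpa using huw) with h | h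
      · exact hadj (by simpa using h)
      · exact hnw (by simpa using h)
    · -- w ∉ U, v ~ w
      rcases lt_trichotomy (σ.symm w) (σ.symm u) with hwu | hwu | hwu
      · -- w ≺ u ≺ v, w~v ⇒ w~u or u~v, so u~w
        rcases hσ (σ.symm w) (σ.symm u) (σ.symm v) hwu hlt (by simpa using hvw.symm)
          with h | h
        · exact Or.inr ⟨hwU, by simpa using h.symm⟩
        · exact absurd (by simpa using h) hadj
      · exfalso
        have : w = u := σ.symm.injective hwu
        exact hwU (this ▸ hu)
      · by_cases huw : G.Adj u w
        · exact Or.inr ⟨hwU, huw⟩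
        · exact Or.inl ⟨huw, hwu⟩
  · intro hsub
    have hvmem : v ∈ Finset.univ.filter (fun w => (¬ G.Adj u w ∧ σ.symm u < σ.symm w) ∨
        (w ∉ U ∧ G.Adj u w)) := by
      simp only [Finset.mem_filter, Finset.mem_univ, true_and]
      exact Or.inl ⟨hadj, hlt⟩
    have := hsub hvmem
    simp only [Finset.mem_filter, Finset.mem_univ, true_and] at this
    rcases this with ⟨_, h⟩ | ⟨h, _⟩
    · exact lt_irrefl _ h
    · exact h hv
end

section
/- Let σ be an umbrella-free ordering of a finite simple graph G = (V, E), let (P_1, …, P_p) and (U_1, …, U_p) be given by the recursive partition-class construction, and let <_P be the strict relation defined by x <_P y iff x ≺_σ y and xy ∉ E. Then for every i with 1 ≤ i ≤ p, P_i is exactly the set of maximal elements of <_P restricted to U_i; that is, P_i = {v ∈ U_i : there is no u ∈ U_i with v <_P u}. -/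
section Aux
variable {V : Type*} [Fintype V] [DecidableEq V] {n : ℕ} (G : SimpleGraph V)
    [DecidableRel G.Adj] (σ : Fin n ≃ V)

def predP (U : Finset V) (v w : V) : Prop :=
  (¬ G.Adj v w ∧ σ.symm v < σ.symm w) ∨ (w ∉ U ∧ G.Adj v w)

instance (U : Finset V) (v w : V) : Decidable (predP G σ U v w) := by
  unfold predP; infer_instance

lemma umbrella_apply (hσ : UmbrellaFree G σ) {a b c : V}
    (hab : σ.symm a < σ.symm b) (hbc : σ.symm b < σ.symm c) (h : G.Adj a c) :
    G.Adj a b ∨ G.Adj b c := by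
  have := hσ (σ.symm a) (σ.symm b) (σ.symm c) hab hbc (by simpa using h)
  simpa using this

lemma ltP_trans (hσ : UmbrellaFree G σ) {x y z : V}
    (h1 : ltP G σ x y) (h2 : ltP G σ y z) : ltP G σ x z := by
  refine ⟨h1.1.trans h2.1, fun h => ?_⟩
  rcases umbrella_apply G σ hσ h1.1 h2.1 h with h' | h'
  exacts [h1.2 h', h2.2 h']

lemma hashAt_eq (U : Finset V) (v : V) :
    hashAt G σ U v = (Finset.univ.filter (predP G σ U v)).card := by
  have hsplit : Finset.univ.filter (predP G σ U v) =
      Finset.univ.filter (fun w => ¬ G.Adj v w ∧ σ.symm v < σ.symm w) ∪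
      Finset.univ.filter (fun w => w ∉ U ∧ G.Adj v w) := by
    ext w
    simp only [Finset.mem_filter, Finset.mem_union, Finset.mem_univ, true_and, predP]
  rw [hashAt, hashStar, hsplit, Finset.card_union_of_disjoint]
  rw [Finset.disjoint_left]
  intro a ha hb
  simp only [Finset.mem_filter] at ha hb
  exact ha.2.1 hb.2.2

lemma predP_of_notMem (U : Finset V)
    (hInv : ∀ z ∉ U, ∀ w ∈ U, σ.symm z < σ.symm w → G.Adj z w)
    {x w : V} (hx : x ∈ U) (hw : w ∉ U) : predP G σ U x w := by
  rcases lt_trichotomy (σ.symm w) (σ.symm x) with h | h | h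
  · exact Or.inr ⟨hw, (hInv w hw x hx h).symm⟩
  · exact absurd (σ.symm.injective h) (fun hwx => hw (hwx ▸ hx))
  · by_cases ha : G.Adj x w
    · exact Or.inr ⟨hw, ha⟩
    · exact Or.inl ⟨ha, h⟩

lemma key_lemma (U : Finset V) (hσ : UmbrellaFree G σ)
    (hInv : ∀ z ∉ U, ∀ w ∈ U, σ.symm z < σ.symm w → G.Adj z w)
    {v u : V} (hv : v ∈ U) (hu : u ∈ U) (h : ltP G σ v u) :
    hashAt G σ U u < hashAt G σ U v := by
  rw [hashAt_eq, hashAt_eq]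
  have hnotmem : u ∉ Finset.univ.filter (predP G σ U u) := by
    simp only [Finset.mem_filter, Finset.mem_univ, true_and, predP]
    push_neg
    exact ⟨fun _ => le_refl _, fun h' => absurd hu h'⟩
  have hsub : insert u (Finset.univ.filter (predP G σ U u)) ⊆
      Finset.univ.filter (predP G σ U v) := by
    intro w hw
    simp only [Finset.mem_insert, Finset.mem_filter, Finset.mem_univ, true_and] at hw ⊢
    rcases hw with rfl | hw
    · exact Or.inl ⟨h.2, h.1⟩
    · rcases hw with ⟨hnadj, horder⟩ | ⟨hwU, hadj⟩
      · refine Or.inl ⟨fun hvw => ?_, h.1.trans horder⟩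
        rcases umbrella_apply G σ hσ h.1 horder hvw with h' | h'
        exacts [h.2 h', hnadj h']
      · exact predP_of_notMem G σ U hInv hv hwU
  calc (Finset.univ.filter (predP G σ U u)).card
      < (insert u (Finset.univ.filter (predP G σ U u))).card := by
        rw [Finset.card_insert_of_notMem hnotmem]; omega
    _ ≤ _ := Finset.card_le_card hsub

lemma eq_of_max (U : Finset V)
    (hInv : ∀ z ∉ U, ∀ w ∈ U, σ.symm z < σ.symm w → G.Adj z w)
    {v u : V} (hv : v ∈ U) (hu : u ∈ U)
    (hvmax : ∀ w ∈ U, ¬ ltP G σ v w) (humax : ∀ w ∈ U, ¬ ltP G σ u w) :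
    hashAt G σ U v = hashAt G σ U u := by
  rw [hashAt_eq, hashAt_eq]
  congr 1
  ext w
  simp only [Finset.mem_filter, Finset.mem_univ, true_and]
  by_cases hwU : w ∈ U
  · constructor
    · rintro (⟨hna, ho⟩ | ⟨hnU, _⟩)
      · exact absurd ⟨ho, hna⟩ (hvmax w hwU)
      · exact absurd hwU hnU
    · rintro (⟨hna, ho⟩ | ⟨hnU, _⟩)
      · exact absurd ⟨ho, hna⟩ (humax w hwU)
      · exact absurd hwU hnU
  · exact iff_of_true (predP_of_notMem G σ U hInv hv hwU)
      (predP_of_notMem G σ U hInv hu hwU)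

lemma exists_max (U : Finset V) (hσ : UmbrellaFree G σ) :
    ∀ m : ℕ, ∀ u ∈ U, n - (σ.symm u).val ≤ m →
      ∃ u' ∈ U, (∀ w ∈ U, ¬ ltP G σ u' w) ∧ (u = u' ∨ ltP G σ u u') := by
  intro m
  induction m with
  | zero =>
    intro u hu h0
    exfalso
    have := (σ.symm u).isLt
    omega
  | succ m ih =>
    intro u hu hle
    by_cases hmax : ∀ w ∈ U, ¬ ltP G σ u w
    · exact ⟨u, hu, hmax, Or.inl rfl⟩
    · push_neg at hmax
      obtain ⟨w, hwU, hlt⟩ := hmax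
      have h1 : (σ.symm u).val < (σ.symm w).val := hlt.1
      have h2 : (σ.symm w).val < n := (σ.symm w).isLt
      obtain ⟨u', hu'U, hu'max, hcase⟩ := ih w hwU (by omega)
      refine ⟨u', hu'U, hu'max, Or.inr ?_⟩
      rcases hcase with rfl | h'
      · exact hlt
      · exact ltP_trans G σ hσ hlt h'

lemma main_lemma (U : Finset V) (hσ : UmbrellaFree G σ)
    (hInv : ∀ z ∉ U, ∀ w ∈ U, σ.symm z < σ.symm w → G.Adj z w) :
    ∀ v : V, v ∈ Pclass G σ U ↔ v ∈ U ∧ ¬ ∃ u ∈ U, ltP G σ v u := by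
  intro v
  rw [Pclass, Finset.mem_filter]
  constructor
  · rintro ⟨hvU, hmin⟩
    refine ⟨hvU, ?_⟩
    rintro ⟨u, hu, hlt⟩
    have h1 := key_lemma G σ U hσ hInv hvU hu hlt
    have h2 := hmin u hu
    omega
  · rintro ⟨hvU, hmax⟩
    push_neg at hmax
    refine ⟨hvU, fun u hu => ?_⟩
    obtain ⟨u', hu'U, hu'max, hcase⟩ :=
      exists_max G σ U hσ (n - (σ.symm u).val) u hu le_rfl
    have heq := eq_of_max G σ U hInv hvU hu'U (fun w hw => hmax w hw) hu'max
    rcases hcase with rfl | hlt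
    · exact le_of_eq heq
    · have := key_lemma G σ U hσ hInv hu hu'U hlt
      omega

end Aux

/-- Each partition class `P_{i+1} = Pclass G σ (Uset G σ i)` is exactly the set of
maximal elements of the order `<_P` restricted to the unvisited set
`U_{i+1} = Uset G σ i`. -/
theorem Pclass_eq_maximal {V : Type*} [Fintype V] [DecidableEq V] (G : SimpleGraph V)
    [DecidableRel G.Adj] {n : ℕ} (σ : Fin n ≃ V) (hσ : UmbrellaFree G σ) (i : ℕ) :
    ∀ v : V, v ∈ Pclass G σ (Uset G σ i) ↔
      v ∈ Uset G σ i ∧ ¬ ∃ u ∈ Uset G σ i, ltP G σ v u := by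
  have H : ∀ j : ℕ,
      (∀ z ∉ Uset G σ j, ∀ w ∈ Uset G σ j, σ.symm z < σ.symm w → G.Adj z w) ∧
      (∀ v : V, v ∈ Pclass G σ (Uset G σ j) ↔
        v ∈ Uset G σ j ∧ ¬ ∃ u ∈ Uset G σ j, ltP G σ v u) := by
    intro j
    induction j with
    | zero =>
      have hInv : ∀ z ∉ Uset G σ 0, ∀ w ∈ Uset G σ 0,
          σ.symm z < σ.symm w → G.Adj z w := by
        intro z hz
        exact absurd (Finset.mem_univ z) hz
      exact ⟨hInv, main_lemma G σ (Uset G σ 0) hσ hInv⟩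
    | succ j ih =>
      have hInv : ∀ z ∉ Uset G σ (j+1), ∀ w ∈ Uset G σ (j+1),
          σ.symm z < σ.symm w → G.Adj z w := by
        intro z hz w hw hlt
        have hw' : w ∈ Uset G σ j := (Finset.mem_sdiff.mp hw).1
        by_cases hzj : z ∈ Uset G σ j
        · have hzP : z ∈ Pclass G σ (Uset G σ j) := by
            by_contra hc
            exact hz (Finset.mem_sdiff.mpr ⟨hzj, hc⟩)
          have hmax := ((ih.2 z).mp hzP).2
          by_contra hnadj
          exact hmax ⟨w, hw', hlt, hnadj⟩
        · exact ih.1 z hzj w hw' hlt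
      exact ⟨hInv, main_lemma G σ (Uset G σ (j+1)) hσ hInv⟩
  exact (H i).2
end

section
/- Let σ be an umbrella-free ordering of a finite simple graph G = (V, E), and let (P_1, …, P_p) be the partition classes given by the recursive partition-class construction. Then every partition class P_i (1 ≤ i ≤ p) is a clique of G; that is, any two distinct vertices u, v ∈ P_i satisfy uv ∈ E. -/
lemma hashAt_card {V : Type*} [Fintype V] [DecidableEq V] {n : ℕ} (G : SimpleGraph V)
    [DecidableRel G.Adj] (σ : Fin n ≃ V) (U : Finset V) (v : V) :
    hashAt G σ U v = (Finset.univ.filter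
      (fun w => (¬ G.Adj v w ∧ σ.symm v < σ.symm w) ∨ (w ∉ U ∧ G.Adj v w))).card := by
  rw [Finset.filter_or, Finset.card_union_of_disjoint]
  · rfl
  · rw [Finset.disjoint_left]
    intro a ha hb
    simp only [Finset.mem_filter] at ha hb
    exact ha.2.1 hb.2.2

lemma key {V : Type*} [Fintype V] [DecidableEq V] (G : SimpleGraph V)
    [DecidableRel G.Adj] {n : ℕ} (σ : Fin n ≃ V) (hσ : UmbrellaFree G σ)
    (U : Finset V) {u v : V} (hu : u ∈ Pclass G σ U) (hv : v ∈ Pclass G σ U)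
    (hlt : σ.symm u < σ.symm v) (hadj : ¬ G.Adj u v) : False := by
  rw [Pclass, Finset.mem_filter] at hu hv
  have hmin : hashAt G σ U u ≤ hashAt G σ U v := hu.2 v hv.1
  have hcard : hashAt G σ U v < hashAt G σ U u := by
    rw [hashAt_card, hashAt_card]
    apply Finset.card_lt_card
    rw [Finset.ssubset_iff_of_subset]
    · refine ⟨v, ?_, ?_⟩
      · simp only [Finset.mem_filter, Finset.mem_univ, true_and]
        exact Or.inl ⟨hadj, hlt⟩
      · simp only [Finset.mem_filter, Finset.mem_univ, true_and, not_or]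
        refine ⟨fun h => lt_irrefl _ h.2, fun h => h.1 hv.1⟩
    · intro w hw
      simp only [Finset.mem_filter, Finset.mem_univ, true_and] at hw ⊢
      rcases hw with ⟨hnvw, hlt2⟩ | ⟨hwU, hvw⟩
      · left
        refine ⟨fun huw => ?_, hlt.trans hlt2⟩
        have := hσ _ _ _ hlt hlt2 (by simpa using huw)
        simp only [Equiv.apply_symm_apply] at this
        tauto
      · by_cases huw : G.Adj u w
        · exact Or.inr ⟨hwU, huw⟩
        · left
          refine ⟨huw, ?_⟩
          rcases lt_trichotomy (σ.symm u) (σ.symm w) with h | h | h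
          · exact h
          · exact absurd (σ.symm.injective h) (fun he => hwU (he ▸ hu.1))
          · exfalso
            have := hσ _ _ _ h hlt (by simpa using hvw.symm)
            simp only [Equiv.apply_symm_apply] at this
            rcases this with h1 | h1
            · exact huw h1.symm
            · exact hadj h1
  omega

theorem Pclass_isClique' {V : Type*} [Fintype V] [DecidableEq V] (G : SimpleGraph V)
    [DecidableRel G.Adj] {n : ℕ} (σ : Fin n ≃ V) (hσ : UmbrellaFree G σ) (U : Finset V) :
    ∀ u ∈ Pclass G σ U, ∀ v ∈ Pclass G σ U, u ≠ v → G.Adj u v := by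
  intro u hu v hv hne
  by_contra hadj
  rcases lt_trichotomy (σ.symm u) (σ.symm v) with h | h | h
  · exact key G σ hσ U hu hv h hadj
  · exact hne (σ.symm.injective h)
  · exact key G σ hσ U hv hu h (fun hh => hadj hh.symm)

/-- Every partition class produced by the partition-class construction from an
umbrella-free ordering is a clique of `G`. -/
theorem Pclass_isClique {V : Type*} [Fintype V] [DecidableEq V] (G : SimpleGraph V)
    [DecidableRel G.Adj] {n : ℕ} (σ : Fin n ≃ V) (hσ : UmbrellaFree G σ) (i : ℕ) :
    ∀ u ∈ Pclass G σ (Uset G σ i), ∀ v ∈ Pclass G σ (Uset G σ i),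
      u ≠ v → G.Adj u v := by
  exact Pclass_isClique' G σ hσ (Uset G σ i)
end

section
/- (Flipping Lemma) Let σ be an umbrella-free ordering of a finite simple graph G = (V, E), let (P_1, …, P_p) be the partition classes given by the recursive partition-class construction, and let τ be any ordering of V that respects the class order, i.e., whenever x ∈ P_i and y ∈ P_j with i < j, then x ≺_τ y. Then for every pair of vertices u, v with uv ∉ E, u ≺_σ v if and only if v ≺_τ u. -/
section Aux
variable {V : Type*} [Fintype V] [DecidableEq V] (G : SimpleGraph V)
  [DecidableRel G.Adj] {n : ℕ} (σ : Fin n ≃ V)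

lemma Uset_anti {i j : ℕ} (h : i ≤ j) : Uset G σ j ⊆ Uset G σ i := by
  induction h with
  | refl => exact subset_rfl
  | step h ih => exact fun x hx => ih (Finset.sdiff_subset hx)

lemma Pclass_nonempty {U : Finset V} (h : U.Nonempty) : (Pclass G σ U).Nonempty := by
  obtain ⟨v, hv, hmin⟩ := Finset.exists_min_image U (hashAt G σ U) h
  exact ⟨v, Finset.mem_filter.mpr ⟨hv, hmin⟩⟩

lemma Uset_card (i : ℕ) (h : (Uset G σ i).Nonempty) :
    (Uset G σ i).card + i ≤ Fintype.card V := by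
  induction i with
  | zero => simp [Uset]
  | succ k ih =>
    have hk : (Uset G σ k).Nonempty :=
      h.mono (Uset_anti G σ (Nat.le_succ k))
    have hlt : (Uset G σ (k+1)).card < (Uset G σ k).card := by
      apply Finset.card_lt_card
      rw [Finset.ssubset_iff_of_subset (show Uset G σ (k+1) ⊆ Uset G σ k from
        Uset_anti G σ (Nat.le_succ k))]
      obtain ⟨x, hx⟩ := Pclass_nonempty G σ hk
      refine ⟨x, Finset.mem_of_mem_filter _ hx, ?_⟩
      show x ∉ Uset G σ k \ Pclass G σ (Uset G σ k)
      simp [hx]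
    have := ih hk
    omega

lemma Uset_empty : Uset G σ (Fintype.card V) = ∅ := by
  by_contra h
  have h' := Uset_card G σ (Fintype.card V) (Finset.nonempty_iff_ne_empty.mpr h)
  have : (Uset G σ (Fintype.card V)).card = 0 := by omega
  exact h (Finset.card_eq_zero.mp this)

lemma exists_cls (u : V) : ∃ i, u ∈ Pclass G σ (Uset G σ i) := by
  have hex : ∃ k, u ∉ Uset G σ k := ⟨Fintype.card V, by rw [Uset_empty]; simp⟩
  have hk0 : Nat.find hex ≠ 0 := by
    intro h
    have := Nat.find_spec hex
    rw [h] at this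
    simp [Uset] at this
  obtain ⟨m, hm⟩ := Nat.exists_eq_succ_of_ne_zero hk0
  have hmem : u ∈ Uset G σ m := by
    by_contra h
    exact Nat.find_min hex (by omega) h
  have hnot : u ∉ Uset G σ (m+1) := by have h := Nat.find_spec hex; rw [hm] at h; exact h
  refine ⟨m, ?_⟩
  show u ∈ Pclass G σ (Uset G σ m)
  by_contra h
  exact hnot (by show u ∈ Uset G σ m \ _; simp [hmem, h])

lemma key_s6 (hσ : UmbrellaFree G σ) :
    ∀ i, ∀ u v : V, u ∈ Uset G σ i → v ∈ Uset G σ i → ¬ G.Adj u v →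
      σ.symm u < σ.symm v →
      hashAt G σ (Uset G σ i) v < hashAt G σ (Uset G σ i) u := by
  intro i
  induction i using Nat.strong_induction_on with
  | _ i IH =>
  intro u v hu hv hadj hlt
  set U := Uset G σ i with hU
  set A : V → Finset V := fun x =>
    Finset.univ.filter (fun w => ¬ G.Adj x w ∧ σ.symm x < σ.symm w) with hA
  set B : V → Finset V := fun x =>
    Finset.univ.filter (fun z => z ∉ U ∧ G.Adj x z) with hB
  have hcard : ∀ x, hashAt G σ U x = (A x).card + (B x).card := fun x => rfl
  have hdisj : ∀ x, Disjoint (A x) (B x) := by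
    intro x
    rw [Finset.disjoint_left]
    intro w hw hw'
    simp only [hA, hB, Finset.mem_filter] at hw hw'
    exact hw.2.1 hw'.2.2
  have hvAu : v ∈ A u := by
    simp only [hA, Finset.mem_filter]
    exact ⟨Finset.mem_univ v, hadj, hlt⟩
  have hsub : A v ∪ B v ⊆ (A u ∪ B u).erase v := by
    intro x hx
    rcases Finset.mem_union.mp hx with hx | hx
    · simp only [hA, Finset.mem_filter] at hx
      obtain ⟨-, hnadj, hlt'⟩ := hx
      have hne : x ≠ v := fun h => by subst h; exact lt_irrefl _ hlt'
      have hux : ¬ G.Adj u x := by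
        intro h
        have := hσ (σ.symm u) (σ.symm v) (σ.symm x) hlt hlt'
          (by simpa using h)
        simp only [Equiv.apply_symm_apply] at this
        tauto
      refine Finset.mem_erase.mpr ⟨hne, Finset.mem_union_left _ ?_⟩
      simp only [hA, Finset.mem_filter]
      exact ⟨Finset.mem_univ x, hux, hlt.trans hlt'⟩
    · simp only [hB, Finset.mem_filter] at hx
      obtain ⟨-, hxU, hvx⟩ := hx
      have hne : x ≠ v := fun h => by subst h; exact hxU hv
      refine Finset.mem_erase.mpr ⟨hne, ?_⟩
      by_cases hux : G.Adj u x
      · refine Finset.mem_union_right _ ?_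
        simp only [hB, Finset.mem_filter]
        exact ⟨Finset.mem_univ x, hxU, hux⟩
      · -- x was removed earlier; show u precedes x in σ
        have hex : ∃ k, x ∉ Uset G σ k := ⟨i, hxU⟩
        have hk0 : Nat.find hex ≠ 0 := by
          intro h
          have := Nat.find_spec hex
          rw [h] at this
          simp [Uset] at this
        obtain ⟨m, hm⟩ := Nat.exists_eq_succ_of_ne_zero hk0
        have hxm : x ∈ Uset G σ m := by
          by_contra h
          exact Nat.find_min hex (by omega) h
        have hxnot : x ∉ Uset G σ (m+1) := by have h := Nat.find_spec hex; rw [hm] at h; exact h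
        have hxP : x ∈ Pclass G σ (Uset G σ m) := by
          by_contra h
          exact hxnot (by show x ∈ Uset G σ m \ _; simp [hxm, h])
        have hmi : m + 1 ≤ i := by
          have h := Nat.find_min' hex hxU; omega
        have hum : u ∈ Uset G σ m := Uset_anti G σ (by omega) hu
        have hnexu : ¬ σ.symm x < σ.symm u := by
          intro hxu
          have h1 := IH m (by omega) x u hxm hum (fun h => hux h.symm) hxu
          have h2 := (Finset.mem_filter.mp hxP).2 u hum
          omega
        have hneq : σ.symm u ≠ σ.symm x := by
          intro h
          exact hxU (by rwa [σ.symm.injective h] at hu)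
        have hltux : σ.symm u < σ.symm x := lt_of_le_of_ne (not_lt.mp hnexu) hneq
        refine Finset.mem_union_left _ ?_
        simp only [hA, Finset.mem_filter]
        exact ⟨Finset.mem_univ x, hux, hltux⟩
  have h1 : (A v ∪ B v).card ≤ ((A u ∪ B u).erase v).card := Finset.card_le_card hsub
  have h2 : ((A u ∪ B u).erase v).card = (A u ∪ B u).card - 1 :=
    Finset.card_erase_of_mem (Finset.mem_union_left _ hvAu)
  have h3 : 0 < (A u ∪ B u).card :=
    Finset.card_pos.mpr ⟨v, Finset.mem_union_left _ hvAu⟩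
  have h4 : (A v ∪ B v).card = (A v).card + (B v).card :=
    Finset.card_union_of_disjoint (hdisj v)
  have h5 : (A u ∪ B u).card = (A u).card + (B u).card :=
    Finset.card_union_of_disjoint (hdisj u)
  rw [hcard, hcard]
  omega

end Aux

/-- The Flipping Lemma: if `τ` is any ordering of `V` that respects the order of the
partition classes (vertices of `P_{i+1} = Pclass G σ (Uset G σ i)` come before those of
`P_{j+1}` whenever `i < j`), then for every non-edge `uv ∉ E`:
`u ≺_σ v` if and only if `v ≺_τ u`. -/



theorem flipping_lemma {V : Type*} [Fintype V] [DecidableEq V] (G : SimpleGraph V)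
    [DecidableRel G.Adj] {n : ℕ} (σ : Fin n ≃ V) (hσ : UmbrellaFree G σ)
    (τ : Fin n ≃ V)
    (hτ : ∀ i j : ℕ, i < j → ∀ x ∈ Pclass G σ (Uset G σ i),
      ∀ y ∈ Pclass G σ (Uset G σ j), τ.symm x < τ.symm y) :
    ∀ u v : V, ¬ G.Adj u v → (σ.symm u < σ.symm v ↔ τ.symm v < τ.symm u) := by
  have main : ∀ a b : V, ¬ G.Adj a b → σ.symm a < σ.symm b → τ.symm b < τ.symm a := by
    intro a b hab hlt
    obtain ⟨ia, ha⟩ := exists_cls G σ a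
    obtain ⟨ib, hb⟩ := exists_cls G σ b
    have hbia : ib < ia := by
      by_contra h
      push_neg at h
      have haU : a ∈ Uset G σ ia := Finset.mem_of_mem_filter _ ha
      have hbU : b ∈ Uset G σ ia :=
        Uset_anti G σ h (Finset.mem_of_mem_filter _ hb)
      have h1 := key_s6 G σ hσ ia a b haU hbU hab hlt
      have h2 := (Finset.mem_filter.mp ha).2 b hbU
      omega
    exact hτ ib ia hbia b hb a ha
  intro u v hadj
  constructor
  · exact main u v hadj
  · intro h
    rcases lt_trichotomy (σ.symm u) (σ.symm v) with h1 | h1 | h1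
    · exact h1
    · exfalso
      have : u = v := σ.symm.injective h1
      subst this
      exact lt_irrefl _ h
    · exact absurd (main v u (fun h' => hadj h'.symm) h1) (not_lt.mpr h.le)
end

section
/- Let σ be an umbrella-free ordering of a finite simple graph G = (V, E), and let τ be any ordering of V with the flipping property with respect to σ: for every pair of vertices u, v with uv ∉ E, u ≺_σ v if and only if v ≺_τ u. Then τ is also an umbrella-free (cocomparability) ordering of G. -/
/-- If `σ` is an umbrella-free ordering of `G` and `τ` has the flipping property with
respect to `σ` (for every non-edge `uv`, `u ≺_σ v ↔ v ≺_τ u`), then `τ` is also an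
umbrella-free (cocomparability) ordering of `G`. -/
theorem umbrellaFree_of_flip {V : Type*} [Fintype V] (G : SimpleGraph V) {n : ℕ}
    (σ τ : Fin n ≃ V) (hσ : UmbrellaFree G σ)
    (hflip : ∀ u v : V, ¬ G.Adj u v → (σ.symm u < σ.symm v ↔ τ.symm v < τ.symm u)) :
    UmbrellaFree G τ := by
  intro i j k hij hjk hik
  by_contra h
  push_neg at h
  obtain ⟨hab, hbc⟩ := h
  have h1 : σ.symm (τ j) < σ.symm (τ i) := by
    have := (hflip (τ j) (τ i) (fun h => hab h.symm)).mpr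
    exact this (by simpa using hij)
  have h2 : σ.symm (τ k) < σ.symm (τ j) := by
    have := (hflip (τ k) (τ j) (fun h => hbc h.symm)).mpr
    exact this (by simpa using hjk)
  have := hσ _ _ _ h2 h1 (by simpa using hik.symm)
  simp only [Equiv.apply_symm_apply] at this
  rcases this with h' | h'
  · exact hbc h'.symm
  · exact hab h'.symm
end

section
/- Let σ be an ordering of a finite simple graph G = (V, E) that is both umbrella-free and satisfies the LexDFS 4-point condition. Then for every triple a ≺_σ b ≺_σ c with ac ∈ E and ab ∉ E, one has bc ∈ E and there exists a vertex d with a ≺_σ d ≺_σ b such that ad ∈ E, db ∈ E, and dc ∉ E. -/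
/-- If `σ` is both umbrella-free and a LexDFS ordering, then for any triple
`a ≺_σ b ≺_σ c` with `ac ∈ E` and `ab ∉ E` one has `bc ∈ E`, and there is a vertex `d`
with `a ≺_σ d ≺_σ b`, `ad ∈ E`, `db ∈ E` and `dc ∉ E`. -/
theorem lexdfs_cocomp_strong_four_point {V : Type*} [Fintype V] (G : SimpleGraph V)
    {n : ℕ} (σ : Fin n ≃ V) (h₁ : UmbrellaFree G σ) (h₂ : FourPointLexDFS G σ) :
    ∀ i j k : Fin n, i < j → j < k → G.Adj (σ i) (σ k) → ¬ G.Adj (σ i) (σ j) →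
      G.Adj (σ j) (σ k) ∧
        ∃ d : Fin n, i < d ∧ d < j ∧ G.Adj (σ i) (σ d) ∧ G.Adj (σ d) (σ j) ∧
          ¬ G.Adj (σ d) (σ k) := by
  intro i j k hij hjk hik hnij
  refine ⟨(h₁ i j k hij hjk hik).resolve_left hnij, ?_⟩
  obtain ⟨d, hid, hdj, hdb, hdk⟩ := h₂ i j k hij hjk hik hnij
  exact ⟨d, hid, hdj, (h₁ i d k hid (hdj.trans hjk) hik).resolve_right hdk, hdb, hdk⟩
end

section
/- Let σ be an umbrella-free ordering of a finite simple graph G = (V, E), let (P_1, …, P_p) be the partition classes given by the recursive partition-class construction, and let <_P be the strict relation defined by x <_P y iff x ≺_σ y and xy ∉ E. Then for every vertex v and every i with 1 ≤ i ≤ p, v ∈ P_i if and only if the maximum length k of a chain v <_P x_1 <_P x_2 <_P … <_P x_k starting at v equals i − 1 (in particular, the index of the class containing v is one more than the length of a longest chain above v in the partial order <_P). -/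
/-! Write `h v` for the length of a longest `<_P`-chain starting at `v`; it drops strictly along
`<_P`. We show `U_{i+1} = {v | i ≤ h v}` by induction on `i`. On such a `U` no vertex outside `U`
lies `<_P`-below a vertex `v ∈ U`, so every vertex outside `U` is counted exactly once in `#_i(v)`:
as a later non-neighbour of `v` or as a removed neighbour. Hence
`#_i(v) = |V \ U| + |{w ∈ U | v <_P w}|`, and the second term vanishes exactly when `h v = i`.
A vertex of height exactly `i` exists as soon as `U` is nonempty, so `P_{i+1} = {v | h v = i}`. -/

open Finset

section ChainHeight

variable {α : Type*} (r : α → α → Prop)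

noncomputable def chainHeight (a : α) : ℕ :=
  sSup {k | ∃ l : List α, (a :: l).IsChain r ∧ l.length = k}

variable {r}

theorem List.IsChain.length_add_lt {f : α → ℕ} (hf : ∀ a b, r a b → f a < f b) {N : ℕ}
    (hN : ∀ a, f a < N) : ∀ {a : α} {l : List α}, (a :: l).IsChain r → l.length + f a < N
  | a, [], _ => by simpa using hN a
  | a, b :: l, h => by
    rw [List.isChain_cons_cons] at h
    have := h.2.length_add_lt hf hN
    have := hf a b h.1
    simp only [List.length_cons]
    omega

variable {N : ℕ} (hN : ∀ a l, (a :: l).IsChain r → l.length ≤ N)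
include hN

theorem bddAbove_isChain_lengths (a : α) :
    BddAbove {k | ∃ l : List α, (a :: l).IsChain r ∧ l.length = k} :=
  ⟨N, by rintro _ ⟨l, hl, rfl⟩; exact hN a l hl⟩

theorem length_le_chainHeight {a : α} {l : List α} (h : (a :: l).IsChain r) :
    l.length ≤ chainHeight r a :=
  le_csSup (bddAbove_isChain_lengths hN a) ⟨l, h, rfl⟩

theorem exists_isChain_length_eq_chainHeight (a : α) :
    ∃ l, (a :: l).IsChain r ∧ l.length = chainHeight r a :=
  Nat.sSup_mem (s := {k | ∃ l : List α, (a :: l).IsChain r ∧ l.length = k})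
    ⟨0, [], .singleton a, rfl⟩ (bddAbove_isChain_lengths hN a)

theorem chainHeight_lt_of_rel {a b : α} (h : r a b) : chainHeight r b < chainHeight r a := by
  obtain ⟨l, hl, hlen⟩ := exists_isChain_length_eq_chainHeight hN b
  have := length_le_chainHeight hN (hl.cons_cons h)
  simp only [List.length_cons] at this
  omega

theorem exists_rel_chainHeight_eq {a : α} {m : ℕ} (h : chainHeight r a = m + 1) :
    ∃ b, r a b ∧ chainHeight r b = m := by
  obtain ⟨_ | ⟨b, l⟩, hl, hlen⟩ := exists_isChain_length_eq_chainHeight hN a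
  · simp only [List.length_nil] at hlen
    omega
  · rw [List.isChain_cons_cons] at hl
    have := length_le_chainHeight hN hl.2
    have := chainHeight_lt_of_rel hN hl.1
    simp only [List.length_cons] at hlen
    exact ⟨b, hl.1, by omega⟩

theorem exists_chainHeight_eq {a : α} {i : ℕ} (h : i ≤ chainHeight r a) :
    ∃ b, chainHeight r b = i := by
  obtain ⟨k, hk⟩ := Nat.exists_eq_add_of_le h
  clear h
  induction k generalizing a with
  | zero => exact ⟨a, hk⟩
  | succ k ih =>
    obtain ⟨b, -, hb⟩ := exists_rel_chainHeight_eq hN hk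
    exact ih hb

theorem exists_rel_le_chainHeight_iff {a : α} {i : ℕ} :
    (∃ b, r a b ∧ i ≤ chainHeight r b) ↔ i < chainHeight r a := by
  constructor
  · rintro ⟨b, hab, hb⟩
    exact hb.trans_lt (chainHeight_lt_of_rel hN hab)
  · intro hi
    obtain ⟨m, hm⟩ := Nat.exists_eq_add_one_of_ne_zero (i.zero_le.trans_lt hi).ne'
    obtain ⟨b, hab, hb⟩ := exists_rel_chainHeight_eq hN hm
    exact ⟨b, hab, by omega⟩

theorem chainHeight_eq_iff {a : α} {i : ℕ} :
    chainHeight r a = i ↔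
      (∃ l, (a :: l).IsChain r ∧ l.length = i) ∧ ∀ l, (a :: l).IsChain r → l.length ≤ i := by
  constructor
  · rintro rfl
    exact ⟨exists_isChain_length_eq_chainHeight hN a, fun l hl => length_le_chainHeight hN hl⟩
  · rintro ⟨⟨l, hl, rfl⟩, hmax⟩
    obtain ⟨l', hl', hlen'⟩ := exists_isChain_length_eq_chainHeight hN a
    have := length_le_chainHeight hN hl
    have := hmax l' hl'
    omega

end ChainHeight

section Partition

variable {V : Type*} [Fintype V] [DecidableEq V] {G : SimpleGraph V} [DecidableRel G.Adj]
  {n : ℕ} {σ : Fin n ≃ V}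

instance : DecidableRel (ltP G σ) := fun _ _ => inferInstanceAs (Decidable (_ ∧ _))

omit [Fintype V] [DecidableEq V] [DecidableRel G.Adj] in
theorem length_le_of_isChain_ltP (v : V) (l : List V) (h : (v :: l).IsChain (ltP G σ)) :
    l.length ≤ n := by
  have := h.length_add_lt (f := fun v => (σ.symm v : ℕ)) (fun _ _ h => h.1)
    (fun v => (σ.symm v).isLt)
  omega

omit [DecidableEq V] in
theorem hashStar_eq_card_ltP (v : V) : hashStar G σ v = #{w | ltP G σ v w} := by
  simp only [hashStar, ltP, and_comm]

theorem hashAt_eq_of_ltP_closed {U : Finset V}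
    (hU : ∀ w v, ltP G σ w v → v ∈ U → w ∈ U) {v : V} (hv : v ∈ U) :
    hashAt G σ U v = #{w | w ∈ U ∧ ltP G σ v w} + #{w | w ∉ U} := by
  have hout : ∀ w, (ltP G σ v w ∧ w ∉ U) ↔ (w ∉ U ∧ ¬ G.Adj v w) := fun w => by
    refine ⟨fun h => ⟨h.2, h.1.2⟩, fun ⟨hw, hadj⟩ => ⟨⟨?_, hadj⟩, hw⟩⟩
    rcases lt_trichotomy (σ.symm v) (σ.symm w) with h | h | h
    · exact h
    · exact absurd (σ.symm.injective h ▸ hv) hw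
    · exact absurd (hU w v ⟨h, fun h' => hadj h'.symm⟩ hv) hw
  have hsplit := card_filter_add_card_filter_not (s := univ.filter (ltP G σ v)) (· ∈ U)
  have hcompl := card_filter_add_card_filter_not (s := univ.filter (· ∉ U)) (¬ G.Adj v ·)
  simp only [filter_filter, hout, not_not] at hsplit hcompl
  rw [hashAt, hashStar_eq_card_ltP, ← hsplit, ← hcompl]
  simp only [and_comm]
  omega

theorem Pclass_filter_le_chainHeight (i : ℕ) :
    Pclass G σ {u | i ≤ chainHeight (ltP G σ) u} =
      ({u | chainHeight (ltP G σ) u = i} : Finset V) := by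
  set U : Finset V := {u | i ≤ chainHeight (ltP G σ) u} with hU
  have hmemU : ∀ u, u ∈ U ↔ i ≤ chainHeight (ltP G σ) u := by simp [hU]
  have hhash : ∀ v ∈ U, hashAt G σ U v = #{w | w ∈ U ∧ ltP G σ v w} + #{w | w ∉ U} :=
    fun v hv => hashAt_eq_of_ltP_closed (fun w v hwv hv => (hmemU w).2 <|
      ((hmemU v).1 hv).trans (chainHeight_lt_of_rel length_le_of_isChain_ltP hwv).le) hv
  have habove : ∀ v ∈ U, #{w | w ∈ U ∧ ltP G σ v w} = 0 ↔ chainHeight (ltP G σ) v = i := by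
    intro v hv
    have hle := (hmemU v).1 hv
    have hnone : (¬∃ w, ltP G σ v w ∧ i ≤ chainHeight (ltP G σ) w) ↔
        chainHeight (ltP G σ) v = i := by
      rw [exists_rel_le_chainHeight_iff length_le_of_isChain_ltP]
      omega
    simpa only [card_eq_zero, filter_eq_empty_iff, mem_univ, true_implies, not_and, hmemU,
      not_exists, imp_not_comm] using hnone
  ext v
  simp only [Pclass, mem_filter, mem_univ, true_and]
  constructor
  · rintro ⟨hv, hmin⟩
    obtain ⟨u, hu⟩ := exists_chainHeight_eq length_le_of_isChain_ltP ((hmemU v).1 hv)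
    have hu' : u ∈ U := (hmemU u).2 hu.ge
    have := hmin u hu'
    rw [hhash v hv, hhash u hu', (habove u hu').2 hu] at this
    exact (habove v hv).1 (by omega)
  · intro hv
    have hv' : v ∈ U := (hmemU v).2 hv.ge
    refine ⟨hv', fun u hu => ?_⟩
    rw [hhash v hv', hhash u hu, (habove v hv').2 hv]
    omega

theorem Uset_eq_filter_le_chainHeight :
    ∀ i : ℕ, Uset G σ i = ({u | i ≤ chainHeight (ltP G σ) u} : Finset V)
  | 0 => by simp [Uset]
  | i + 1 => by
    ext v
    simp only [Uset, Uset_eq_filter_le_chainHeight i, Pclass_filter_le_chainHeight, mem_sdiff, mem_filter, mem_univ,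
      true_and]
    omega

end Partition

theorem mem_Pclass_iff_height_general {V : Type*} [Fintype V] [DecidableEq V]
    (G : SimpleGraph V) [DecidableRel G.Adj] {n : ℕ} (σ : Fin n ≃ V)
    (i : ℕ) (v : V) :
    v ∈ Pclass G σ (Uset G σ i) ↔
      ((∃ l : List V, List.Chain (ltP G σ) v l ∧ l.length = i) ∧
        ∀ l : List V, List.Chain (ltP G σ) v l → l.length ≤ i) := by
  rw [Uset_eq_filter_le_chainHeight, Pclass_filter_le_chainHeight, mem_filter]
  exact (and_iff_right (mem_univ v)).trans (chainHeight_eq_iff length_le_of_isChain_ltP)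

/-- For every valid step of the construction (i.e. while the unvisited set is still
nonempty, which is exactly the condition `1 ≤ i+1 ≤ p`), a vertex `v` belongs to the
class `P_{i+1} = Pclass G σ (Uset G σ i)` if and only if the maximum length of a chain
`v <_P x₁ <_P ⋯ <_P x_k` starting at `v` equals `i` (one less than the 1-indexed class
index `i+1`). -/
theorem mem_Pclass_iff_height {V : Type*} [Fintype V] [DecidableEq V]
    (G : SimpleGraph V) [DecidableRel G.Adj] {n : ℕ} (σ : Fin n ≃ V)
    (hσ : UmbrellaFree G σ) (i : ℕ) (hne : (Uset G σ i).Nonempty) (v : V) :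
    v ∈ Pclass G σ (Uset G σ i) ↔
      ((∃ l : List V, List.Chain (ltP G σ) v l ∧ l.length = i) ∧
        ∀ l : List V, List.Chain (ltP G σ) v l → l.length ≤ i) :=
  mem_Pclass_iff_height_general G σ i v
end
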